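/- Let A ∈ M_d(ℤ) with det A ≠ 0 and det(A − I) ≠ 0, and let p₁, ..., p_s be prime numbers with gcd(p_i, det A) = 1 for every i. Then there exist an infinite set I ⊆ ℕ and an integer γ ≥ 1 such that for every i ∈ {1,...,s} and every N ∈ I, p_i^γ does not divide det(A^N − I). -/

import Mathlib

/-!
Reduce modulo `M = ∏ pᵢ^γ`: since `det A` is prime to `M`, the image of `A` is a unit of the
finite ring of matrices over `ZMod M`, so it has some finite order `m`. Along `N = m k + 1` the
determinant `det (A^N - 1)` is then congruent to `det (A - 1)` modulo `M`, and `pᵢ^γ` cannot divide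
the nonzero integer `det (A - 1)` once `γ ≥ |det (A - 1)|`.
-/

variable {n : Type*} [Fintype n] [DecidableEq n]

theorem Matrix.exists_pow_eq_one_of_isUnit_det {R : Type*} [CommRing R] [Finite R]
    {B : Matrix n n R} (hB : IsUnit B.det) : ∃ m, 0 < m ∧ B ^ m = 1 := by
  obtain ⟨m, hm, h⟩ :=
    (isOfFinOrder_of_finite ((Matrix.isUnit_iff_isUnit_det B).mpr hB).unit).exists_pow_eq_one
  exact ⟨m, hm, by simpa using congrArg Units.val h⟩

theorem ZMod.isUnit_intCast_of_isCoprime {M : ℕ} {a : ℤ} (h : IsCoprime (M : ℤ) a) :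
    IsUnit (a : ZMod M) := by
  obtain ⟨u, v, huv⟩ := h
  refine IsUnit.of_mul_eq_one (v : ZMod M) ?_
  simpa [mul_comm] using congrArg (Int.cast : ℤ → ZMod M) huv

theorem Matrix.det_pow_mul_add_one_sub_one_modEq {M : ℕ} [NeZero M] {A : Matrix n n ℤ}
    (h : IsCoprime (M : ℤ) A.det) :
    ∃ m, 0 < m ∧ ∀ k, (A ^ (m * k + 1) - 1).det ≡ (A - 1).det [ZMOD M] := by
  set f := Int.castRingHom (ZMod M)
  have hunit : IsUnit (f.mapMatrix A).det := by
    rw [← RingHom.map_det]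
    exact ZMod.isUnit_intCast_of_isCoprime h
  obtain ⟨m, hm, hpow⟩ := Matrix.exists_pow_eq_one_of_isUnit_det hunit
  refine ⟨m, hm, fun k => (ZMod.intCast_eq_intCast_iff _ _ _).mp ?_⟩
  change f _ = f _
  rw [RingHom.map_det, RingHom.map_det, map_sub, map_sub, map_one, map_pow, pow_add, pow_mul,
    hpow, one_pow, one_mul, pow_one]

theorem Int.not_pow_natAbs_dvd {p : ℕ} (hp : 1 < p) {a : ℤ} (ha : a ≠ 0) :
    ¬ (p : ℤ) ^ a.natAbs ∣ a := by
  intro h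
  have hle := Int.natAbs_le_of_dvd_ne_zero h ha
  rw [Int.natAbs_pow, Int.natAbs_natCast] at hle
  exact (Nat.lt_pow_self hp).not_ge hle

theorem stmt_6_general (d s : ℕ) (A : Matrix (Fin d) (Fin d) ℤ)
    (hAI : (A - 1).det ≠ 0)
    (p : Fin s → ℕ) (hp : ∀ i, (p i).Prime)
    (hcop : ∀ i, IsCoprime ((p i : ℤ)) A.det) :
    ∃ I : Set ℕ, I.Infinite ∧ ∃ γ : ℕ, 1 ≤ γ ∧
      ∀ i, ∀ N ∈ I, ¬ ((p i : ℤ) ^ γ ∣ (A ^ N - 1).det) := by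
  set γ := (A - 1).det.natAbs
  set M := ∏ i, p i ^ γ
  have : NeZero M := ⟨Finset.prod_ne_zero_iff.mpr fun i _ => pow_ne_zero _ (hp i).ne_zero⟩
  have hM : IsCoprime (M : ℤ) A.det := by
    push_cast [M]
    exact IsCoprime.prod_left fun i _ => (hcop i).pow_left
  obtain ⟨m, hm, hmod⟩ := Matrix.det_pow_mul_add_one_sub_one_modEq hM
  refine ⟨Set.range (fun k => m * k + 1), Set.infinite_range_of_injective fun a b hab => ?_,
    γ, Int.natAbs_pos.mpr hAI, ?_⟩
  · exact Nat.eq_of_mul_eq_mul_left hm (by simpa using hab)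
  · rintro i _ ⟨k, rfl⟩ hdvd
    have hpM : (p i : ℤ) ^ γ ∣ M := by
      exact_mod_cast Finset.dvd_prod_of_mem _ (Finset.mem_univ i)
    exact Int.not_pow_natAbs_dvd (hp i).one_lt hAI (((hmod k).of_dvd hpM).dvd_iff.mp hdvd)

theorem stmt_6 (d s : ℕ) (A : Matrix (Fin d) (Fin d) ℤ)
    (hA : A.det ≠ 0) (hAI : (A - 1).det ≠ 0)
    (p : Fin s → ℕ) (hp : ∀ i, (p i).Prime)
    (hcop : ∀ i, IsCoprime ((p i : ℤ)) A.det) :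
    ∃ I : Set ℕ, I.Infinite ∧ ∃ γ : ℕ, 1 ≤ γ ∧
      ∀ i, ∀ N ∈ I, ¬ ((p i : ℤ) ^ γ ∣ (A ^ N - 1).det) :=
  stmt_6_general d s A hAI p hp hcop
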